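/- Let G be a group and V a left ℤ[G]-module. The map R : (G × V)² → (G × V)² defined by R((x,a),(y,b)) = ((x⁻¹ y⁻¹ x, (-x⁻¹ + x⁻¹y⁻¹)·a + (-x⁻¹y⁻¹)·b), (y² x, y²·a + (1 + y)·b)) is a solution to the set-theoretic Yang–Baxter equation on G × V. -/

import Mathlib

/-- `R × 1` acting on the first two factors of `X × X × X`. -/
def R12 {X : Type*} (R : X × X → X × X) : X × X × X → X × X × X :=
  fun p => ((R (p.1, p.2.1)).1, (R (p.1, p.2.1)).2, p.2.2)

/-- `1 × R` acting on the last two factors of `X × X × X`. -/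
def R23 {X : Type*} (R : X × X → X × X) : X × X × X → X × X × X :=
  fun p => (p.1, R p.2)

/-- `R` is a solution to the set-theoretic Yang–Baxter equation. -/
def IsSYBE {X : Type*} (R : X × X → X × X) : Prop :=
  R12 R ∘ R23 R ∘ R12 R = R23 R ∘ R12 R ∘ R23 R

/-!
The group coordinates of `R` only see the group coordinates of its input, and there `R` is the
solution `(x, y) ↦ (x⁻¹ y⁻¹ x, y² x)` on `G`. The `V`-coordinates of both sides of the braid
relation are `ℤ[G]`-linear in the vectors `a, b, c`; expanded, they are `ℤ`-combinations of
`g • a, g • b, g • c` with `g` a word in `x, y, z`, and once these words are freely reduced the two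
combinations coincide.
-/

theorem isSYBE_inv_mul_inv_mul_sq_mul (G : Type*) [Group G] :
    IsSYBE fun p : G × G => (p.1⁻¹ * p.2⁻¹ * p.1, p.2 ^ 2 * p.1) := by
  funext ⟨x, y, z⟩
  simp only [R12, R23, Function.comp_apply, Prod.mk.injEq, pow_two]
  refine ⟨?_, ?_, ?_⟩ <;> group

theorem MonoidAlgebra.of_smul_of_smul {k G V : Type*} [Semiring k] [Monoid G] [AddCommMonoid V]
    [Module (MonoidAlgebra k G) V] (g h : G) (v : V) :
    of k G g • of k G h • v = of k G (g * h) • v := by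
  rw [smul_smul, ← map_mul]

open MonoidAlgebra in
theorem stmt9 (G : Type*) [Group G] (V : Type*) [AddCommGroup V]
    [Module (MonoidAlgebra ℤ G) V] :
    IsSYBE (fun p : (G × V) × (G × V) =>
      ((p.1.1⁻¹ * p.2.1⁻¹ * p.1.1,
        (-(of ℤ G p.1.1⁻¹) + of ℤ G (p.1.1⁻¹ * p.2.1⁻¹)) • p.1.2
          + (-(of ℤ G (p.1.1⁻¹ * p.2.1⁻¹))) • p.2.2),
       (p.2.1 ^ 2 * p.1.1,
        (of ℤ G (p.2.1 ^ 2)) • p.1.2 + (1 + of ℤ G p.2.1) • p.2.2))) := by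
  funext ⟨⟨x, a⟩, ⟨y, b⟩, ⟨z, c⟩⟩
  have hG := congrFun (isSYBE_inv_mul_inv_mul_sq_mul G) (x, y, z)
  simp only [R12, R23, Function.comp_apply, Prod.mk.injEq] at hG ⊢
  refine ⟨⟨hG.1, ?_⟩, ⟨hG.2.1, ?_⟩, hG.2.2, ?_⟩
  all_goals
    simp only [pow_two, add_smul, neg_smul, one_smul, smul_add, smul_neg, of_smul_of_smul,
      mul_assoc, mul_inv_rev, inv_inv, mul_inv_cancel_left, inv_mul_cancel_left,
      mul_inv_cancel, inv_mul_cancel, mul_one]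
    abel
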